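/- Let d = d_1 d_2 with gcd(d_1, d_2) = 1. Under the Chinese remainder theorem maps m ↔ (m mod d_1, m mod d_2) and n ↔ (n·t_1 mod d_1, n·t_2 mod d_2) (where t_i·r_i ≡ 1 mod d_i, r_1 = d_2, r_2 = d_1), the line L(ν, μ) in Z(d) × Z(d) corresponds bijectively to the Cartesian product (in the sense of the combined coordinate map) of the lines L^(1)(ν_1, μ̄_1) ⊆ Z(d_1)×Z(d_1) and L^(2)(ν_2, μ̄_2) ⊆ Z(d_2)×Z(d_2). -/

import Mathlib

/-- The line through the origin in `Z(e) × Z(e)` generated by `(ν, μ)`. -/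
def line (e : ℕ) (ν μ : ZMod e) : Set (ZMod e × ZMod e) :=
  {p | ∃ α : ZMod e, p = (ν * α, μ * α)}

/-!
The coordinate map factors as `(m, n) ↦ (crt m, (t₁, t₂) · crt n)` followed by regrouping the
four coordinates, where `crt x = (x mod d₁, x mod d₂)` is the Chinese remainder isomorphism and
`(t₁, t₂)` is a unit; so it is bijective.  A line is the range of `α ↦ (να, μα)`, and since the
coordinate maps are ring homomorphisms, the image of `L(ν, μ)` is the range of
`(β₁, β₂) ↦ ((ν₁β₁, μ̄₁β₁), (ν₂β₂, μ̄₂β₂))` precomposed with the surjection `crt`, which is the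
product of the two component lines.
-/

theorem line_eq_range (e : ℕ) (ν μ : ZMod e) :
    line e ν μ = Set.range fun α => (ν * α, μ * α) := by
  ext p
  simp only [line, Set.mem_ofPred_eq, Set.mem_range, eq_comm]

theorem ZMod.castHom_prod_bijective {d1 d2 : ℕ} (hco : Nat.Coprime d1 d2) :
    Function.Bijective fun x : ZMod (d1 * d2) =>
      (ZMod.castHom (dvd_mul_right d1 d2) (ZMod d1) x,
       ZMod.castHom (dvd_mul_left d2 d1) (ZMod d2) x) := by
  convert (ZMod.chineseRemainder hco).bijective using 1
  funext x
  ext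
  · simp [ZMod.chineseRemainder, Prod.fst_zmod_cast]
  · simp [ZMod.chineseRemainder, Prod.snd_zmod_cast]

theorem line_crt_factorization_general (d1 d2 : ℕ)
    (hco : Nat.Coprime d1 d2)
    (t1 : ZMod d1) (t2 : ZMod d2)
    (ht1 : t1 * (d2 : ZMod d1) = 1) (ht2 : t2 * (d1 : ZMod d2) = 1) :
    Function.Bijective
      (fun p : ZMod (d1 * d2) × ZMod (d1 * d2) =>
        ((ZMod.castHom (dvd_mul_right d1 d2) (ZMod d1) p.1,
          t1 * ZMod.castHom (dvd_mul_right d1 d2) (ZMod d1) p.2),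
         (ZMod.castHom (dvd_mul_left d2 d1) (ZMod d2) p.1,
          t2 * ZMod.castHom (dvd_mul_left d2 d1) (ZMod d2) p.2))) ∧
    ∀ ν μ : ZMod (d1 * d2),
      (fun p : ZMod (d1 * d2) × ZMod (d1 * d2) =>
        ((ZMod.castHom (dvd_mul_right d1 d2) (ZMod d1) p.1,
          t1 * ZMod.castHom (dvd_mul_right d1 d2) (ZMod d1) p.2),
         (ZMod.castHom (dvd_mul_left d2 d1) (ZMod d2) p.1,
          t2 * ZMod.castHom (dvd_mul_left d2 d1) (ZMod d2) p.2))) '' line (d1 * d2) ν μ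
      = (line d1 (ZMod.castHom (dvd_mul_right d1 d2) (ZMod d1) ν)
              (t1 * ZMod.castHom (dvd_mul_right d1 d2) (ZMod d1) μ)) ×ˢ
        (line d2 (ZMod.castHom (dvd_mul_left d2 d1) (ZMod d2) ν)
              (t2 * ZMod.castHom (dvd_mul_left d2 d1) (ZMod d2) μ)) := by
  have hcrt := ZMod.castHom_prod_bijective hco
  have hscale : Function.Bijective (Prod.map (t1 * ·) (t2 * ·)) :=
    (IsUnit.isUnit_iff_mulLeft_bijective.mp (IsUnit.of_mul_eq_one _ ht1)).prodMap
      (IsUnit.isUnit_iff_mulLeft_bijective.mp (IsUnit.of_mul_eq_one _ ht2))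
  refine ⟨(Equiv.prodProdProdComm _ _ _ _).bijective.comp (hcrt.prodMap (hscale.comp hcrt)),
    fun ν μ => ?_⟩
  rw [line_eq_range, line_eq_range, line_eq_range, ← Set.range_comp, ← Set.range_prodMap,
    ← hcrt.2.range_comp]
  congr 1
  funext α
  simp only [Function.comp_apply, Prod.map_apply, map_mul, mul_assoc]

/-- Let `d = d₁d₂` with `d₁, d₂` coprime, and let `tᵢ` be the inverse of `rᵢ` mod `dᵢ`
(`r₁ = d₂`, `r₂ = d₁`).  The combined Chinese-remainder map
`(m, n) ↦ ((m mod d₁, t₁·(n mod d₁)), (m mod d₂, t₂·(n mod d₂)))` is a bijection from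
`Z(d) × Z(d)` onto `(Z(d₁) × Z(d₁)) × (Z(d₂) × Z(d₂))`, and under it the line
`L(ν, μ)` corresponds bijectively to the Cartesian product of the component lines
`L⁽¹⁾(ν₁, μ̄₁)` and `L⁽²⁾(ν₂, μ̄₂)`. -/
theorem line_crt_factorization (d1 d2 : ℕ) (h1 : 0 < d1) (h2 : 0 < d2)
    (hco : Nat.Coprime d1 d2)
    (t1 : ZMod d1) (t2 : ZMod d2)
    (ht1 : t1 * (d2 : ZMod d1) = 1) (ht2 : t2 * (d1 : ZMod d2) = 1) :
    Function.Bijective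
      (fun p : ZMod (d1 * d2) × ZMod (d1 * d2) =>
        ((ZMod.castHom (dvd_mul_right d1 d2) (ZMod d1) p.1,
          t1 * ZMod.castHom (dvd_mul_right d1 d2) (ZMod d1) p.2),
         (ZMod.castHom (dvd_mul_left d2 d1) (ZMod d2) p.1,
          t2 * ZMod.castHom (dvd_mul_left d2 d1) (ZMod d2) p.2))) ∧
    ∀ ν μ : ZMod (d1 * d2),
      (fun p : ZMod (d1 * d2) × ZMod (d1 * d2) =>
        ((ZMod.castHom (dvd_mul_right d1 d2) (ZMod d1) p.1,
          t1 * ZMod.castHom (dvd_mul_right d1 d2) (ZMod d1) p.2),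
         (ZMod.castHom (dvd_mul_left d2 d1) (ZMod d2) p.1,
          t2 * ZMod.castHom (dvd_mul_left d2 d1) (ZMod d2) p.2))) '' line (d1 * d2) ν μ
      = (line d1 (ZMod.castHom (dvd_mul_right d1 d2) (ZMod d1) ν)
              (t1 * ZMod.castHom (dvd_mul_right d1 d2) (ZMod d1) μ)) ×ˢ
        (line d2 (ZMod.castHom (dvd_mul_left d2 d1) (ZMod d2) ν)
              (t2 * ZMod.castHom (dvd_mul_left d2 d1) (ZMod d2) μ)) :=
  line_crt_factorization_general d1 d2 hco t1 t2 ht1 ht2
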